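/- arXiv:0808.0345 — 4 statements merged into one kernel-verified Lean document; each statement's English description precedes it below -/
import Mathlib

section
/- Let R be a commutative ring with elements q, r ∈ R, and let A be an associative R-algebra. Suppose U, D ∈ A satisfy D·U = q·U·D + r·1. Then for every polynomial f = ∑_{i=0}^{N} a_i X^i ∈ R[X], one has D·f(U) = r·f^{(q)}(U) + g(U)·D, where f^{(q)} = ∑_{i=1}^{N} [i]_q a_i X^{i-1} is the q-derivative of f, and g = ∑_{i=0}^{N} a_i q^i X^i is the polynomial f with X replaced by qX. -/
open Polynomial

/-- The `q`-integer `[n]_q = 1 + q + ⋯ + q^{n-1}`. -/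
def qInt {R : Type*} [CommRing R] (q : R) (n : ℕ) : R :=
  ∑ j ∈ Finset.range n, q ^ j

/-- The `q`-derivative of a polynomial: `(∑ aᵢ Xⁱ)^{(q)} = ∑_{i≥1} [i]_q aᵢ X^{i-1}`. -/
noncomputable def qDeriv {R : Type*} [CommRing R] (q : R) (f : R[X]) : R[X] :=
  f.sum fun i a => C (qInt q i * a) * X ^ (i - 1)

/-!
Both sides of the identity are additive in `f`, so it suffices to treat `f = a Xⁿ`, i.e. to
commute `D` past `Uⁿ`. Moving `D` past one factor `U` at a time multiplies the `D`-term by `q`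
and produces a constant term `r`; after `n` steps the constant terms add up to
`r (1 + q + ⋯ + q^{n-1}) U^{n-1} = r [n]_q U^{n-1}`.
-/

section

variable {R : Type*} [CommRing R]

lemma qInt_zero (q : R) : qInt q 0 = 0 := Finset.sum_range_zero _

lemma qInt_succ (q : R) (n : ℕ) : qInt q (n + 1) = qInt q n + q ^ n :=
  Finset.sum_range_succ _ _

lemma qDeriv_add (q : R) (f g : R[X]) : qDeriv q (f + g) = qDeriv q f + qDeriv q g := by
  unfold qDeriv
  apply sum_add_index <;> intros <;> simp [mul_add, add_mul]

lemma qDeriv_monomial (q : R) (n : ℕ) (a : R) :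
    qDeriv q (monomial n a) = monomial (n - 1) (qInt q n * a) := by
  rw [qDeriv, sum_monomial_index _ _ (by simp), C_mul_X_pow_eq_monomial]

lemma monomial_comp_C_mul_X (q : R) (n : ℕ) (a : R) :
    (monomial n a).comp (C q * X) = monomial n (q ^ n * a) := by
  rw [monomial_comp, mul_pow, ← C_pow, ← mul_assoc, ← C_mul, mul_comm a,
    C_mul_X_pow_eq_monomial]

variable {A : Type*} [Ring A] [Algebra R A]

lemma aeval_monomial_eq_smul (U : A) (n : ℕ) (a : R) : aeval U (monomial n a) = a • U ^ n := by
  rw [aeval_monomial, Algebra.smul_def]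

lemma mul_pow_of_mul_eq_smul_mul_add {q r : R} {U D : A}
    (h : D * U = q • (U * D) + r • (1 : A)) (n : ℕ) :
    D * U ^ n = (r * qInt q n) • U ^ (n - 1) + q ^ n • (U ^ n * D) := by
  induction n with
  | zero => simp [qInt_zero]
  | succ n ih =>
    have shift : ((r * qInt q n) • U ^ (n - 1)) * U = (r * qInt q n) • U ^ n := by
      -- `U ^ (0 - 1) * U ≠ U ^ 0` in general, but then the coefficient `[0]_q` vanishes
      rcases n with _ | m
      · simp [qInt_zero]
      · rw [smul_mul_assoc, ← pow_succ, Nat.add_sub_cancel]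
    calc D * U ^ (n + 1)
        = (D * U ^ n) * U := by rw [pow_succ, mul_assoc]
      _ = (r * qInt q n) • U ^ n + q ^ n • (U ^ n * (D * U)) := by
          rw [ih, add_mul, shift, smul_mul_assoc, mul_assoc]
      _ = (r * qInt q (n + 1)) • U ^ n + q ^ (n + 1) • (U ^ (n + 1) * D) := by
          rw [h, mul_add, mul_smul_comm, mul_smul_comm, ← mul_assoc, ← pow_succ, mul_one,
            qInt_succ, pow_succ q]
          module

end

/-- Let `R` be a commutative ring, `q, r ∈ R`, and `A` an associative
`R`-algebra.  If `U, D ∈ A` satisfy `D·U = q·U·D + r·1`, then for every polynomial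
`f ∈ R[X]` one has `D·f(U) = r·f^{(q)}(U) + g(U)·D` where `f^{(q)}` is the
`q`-derivative of `f` and `g(X) = f(qX)`. -/
theorem stmt_1 {R : Type*} [CommRing R] {A : Type*} [Ring A] [Algebra R A]
    (q r : R) (U D : A) (h : D * U = q • (U * D) + r • (1 : A))
    (f : R[X]) :
    D * aeval U f = r • aeval U (qDeriv q f) + aeval U (f.comp (C q * X)) * D := by
  induction f using Polynomial.induction_on' with
  | add f g hf hg =>
    rw [map_add, mul_add, hf, hg, qDeriv_add, map_add, add_comp, map_add, smul_add, add_mul]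
    abel
  | monomial n a =>
    rw [qDeriv_monomial, monomial_comp_C_mul_X, aeval_monomial_eq_smul,
      aeval_monomial_eq_smul, aeval_monomial_eq_smul, mul_smul_comm,
      mul_pow_of_mul_eq_smul_mul_add h, smul_mul_assoc]
    module
end

section
/- Represent a permutation of {1,…,n} as a list of length n containing each of 1,…,n exactly once, and let S_n denote the set of such lists. For u ∈ S_k and w ∈ S_{k+1}, define a(u, w) = q^{k+1-s} if deleting the letter k+1 from w (where s is the 1-based position of k+1 in w) yields u, and a(u, w) = 0 otherwise; define b(u, w) = 1 if u is obtained from w by deleting the first letter of w and decreasing every letter larger than the deleted letter by one, and b(u, w) = 0 otherwise. Then for every w ∈ S_n: (i) ∑ over all sequences ∅ = w_0, w_1, …, w_n = w with w_k ∈ S_k of ∏_{k=1}^{n} a(w_{k-1}, w_k) equals q^{inv(w)}, where inv(w) = #{(i,j) : i < j and w_i > w_j}; and (ii) ∑ over all sequences ∅ = w_0, w_1, …, w_n = w with w_k ∈ S_k of ∏_{k=1}^{n} b(w_{k-1}, w_k) equals 1. -/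
open Polynomial
open scoped Classical

/-- The set of permutations of `{1, …, n}`, represented as the `Finset` of lists that are
rearrangements of `[1, 2, …, n]`, i.e. contain each of `1, …, n` exactly once. -/
def permsOf (n : ℕ) : Finset (List ℕ) :=
  (List.range' 1 n).permutations.toFinset

/-- The up-weight in `Perm`: for `u ∈ S_k` and `w ∈ S_{k+1}`, `a(u,w) = q^{k+1-s}` if
deleting the letter `k+1` from `w` yields `u`, where `s` is the 1-based position of the
letter `k+1` in `w`; otherwise `a(u,w) = 0`.  (Here `q = X ∈ ℤ[q]`.) -/
noncomputable def permUp (k : ℕ) (u w : List ℕ) : Polynomial ℤ :=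
  if w.erase (k + 1) = u then X ^ (k + 1 - (w.idxOf (k + 1) + 1)) else 0

/-- The down-weight in `Perm'`: `b(u,w) = 1` if `u` is obtained from `w` by deleting the
first letter of `w` and decreasing every letter of `w` larger than the deleted letter by
one; otherwise `b(u,w) = 0`. -/
noncomputable def permDown (u w : List ℕ) : Polynomial ℤ :=
  if u = w.tail.map (fun x => if w.headI < x then x - 1 else x) then 1 else 0

/-- The number of inversions of a word `w`: the number of pairs of positions `i < j`
with `w_i > w_j`. -/
def invCount (w : List ℕ) : ℕ :=
  (Finset.univ.filter fun p : Fin w.length × Fin w.length =>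
    p.1 < p.2 ∧ w.get p.2 < w.get p.1).card

/-!
A nonzero weight `a(u, w)` forces `u` to be `w` with its letter `k + 1` erased, and a nonzero
`b(u, w)` forces `u` to be the standardized tail of `w`. So in either graph a path of nonzero
weight is determined by its endpoint, read backwards, and each sum has exactly one nonzero term.
In `Perm` this path consists of the subwords `w_k` of `w` formed by the letters `≤ k`. Its `k`-th
step has weight `q ^ (k - i)`, where `i` is the `0`-based position of `k + 1` in `w_(k+1)`; the
exponent counts the letters of `w` smaller than `k + 1` standing to its right, and summed over `k`
these counts give `inv(w)`.
-/

theorem path_eq_of_backward {α : Type*} {n : ℕ} (F : ℕ → α → α) {p q : Fin (n + 1) → α}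
    (hlast : p (Fin.last n) = q (Fin.last n))
    (hp : ∀ k : Fin n, p k.castSucc = F k (p k.succ))
    (hq : ∀ k : Fin n, q k.castSucc = F k (q k.succ)) : p = q :=
  funext fun i => Fin.reverseInduction hlast (fun k ih => by rw [hp, hq, ih]) i

theorem finsum_prod_eq_of_backward {α R : Type*} [CommSemiring R] {n : ℕ}
    {P : (Fin (n + 1) → α) → Prop} (F : ℕ → α → α) (c : ℕ → α → α → R)
    (hc : ∀ k u v, u ≠ F k v → c k u v = 0) (p₀ : Fin (n + 1) → α) (hp₀ : P p₀)
    (hp₀F : ∀ k : Fin n, p₀ k.castSucc = F k (p₀ k.succ))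
    (hlast : ∀ p, P p → p (Fin.last n) = p₀ (Fin.last n)) :
    ∑ᶠ p : {p // P p}, ∏ k : Fin n, c k (p.1 k.castSucc) (p.1 k.succ) =
      ∏ k : Fin n, c k (F k (p₀ k.succ)) (p₀ k.succ) := by
  simp only [← hp₀F]
  refine finsum_eq_single _ (⟨p₀, hp₀⟩ : {p // P p}) fun p hne => ?_
  by_contra hprod
  have hpF : ∀ k : Fin n, p.1 k.castSucc = F k (p.1 k.succ) := fun k => by
    by_contra hk
    exact hprod (Finset.prod_eq_zero (Finset.mem_univ k) (hc _ _ _ hk))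
  exact hne (Subtype.ext (path_eq_of_backward F (hlast p p.2) hpF hp₀F))

theorem mem_range'_one_iff {n x : ℕ} : x ∈ List.range' 1 n ↔ 1 ≤ x ∧ x ≤ n := by
  rw [List.mem_range'_1]; omega

theorem mem_permsOf_iff {n : ℕ} {w : List ℕ} :
    w ∈ permsOf n ↔ w.Nodup ∧ w.length = n ∧ ∀ x ∈ w, 1 ≤ x ∧ x ≤ n := by
  simp only [permsOf, List.mem_toFinset, List.mem_permutations]
  constructor
  · intro h
    exact ⟨h.nodup_iff.2 List.nodup_range', by simpa using h.length_eq,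
      fun x hx => mem_range'_one_iff.1 (h.subset hx)⟩
  · rintro ⟨hnd, hlen, hbd⟩
    exact (hnd.subperm fun x hx => mem_range'_one_iff.2 (hbd x hx)).perm_of_length_le
      (by simp [hlen])

theorem mem_iff_of_mem_permsOf {n x : ℕ} {w : List ℕ} (h : w ∈ permsOf n) :
    x ∈ w ↔ 1 ≤ x ∧ x ≤ n := by
  rw [permsOf, List.mem_toFinset, List.mem_permutations] at h
  rw [h.mem_iff, mem_range'_one_iff]

theorem eq_nil_of_mem_permsOf_zero {w : List ℕ} (h : w ∈ permsOf 0) : w = [] :=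
  List.length_eq_zero_iff.1 (mem_permsOf_iff.1 h).2.1

theorem erase_mem_permsOf {k : ℕ} {v : List ℕ} (h : v ∈ permsOf (k + 1)) :
    v.erase (k + 1) ∈ permsOf k := by
  obtain ⟨hnd, hlen, hbd⟩ := mem_permsOf_iff.1 h
  have hmem : k + 1 ∈ v := (mem_iff_of_mem_permsOf h).2 (by omega)
  refine mem_permsOf_iff.2 ⟨hnd.erase _, by simp [List.length_erase_of_mem hmem, hlen], ?_⟩
  intro x hx
  rw [hnd.mem_erase_iff] at hx
  have := hbd x hx.2
  omega

theorem filter_le_succ_erase {w : List ℕ} (hw : w.Nodup) (k : ℕ) :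
    (w.filter (· ≤ k + 1)).erase (k + 1) = w.filter (· ≤ k) := by
  rw [(hw.filter _).erase_eq_filter, List.filter_filter]
  refine List.filter_congr fun x _ => ?_
  by_cases hx : x ≤ k <;> by_cases hx' : x = k + 1 <;> simp [hx, hx'] <;> omega

theorem filter_le_eq_self {n : ℕ} {w : List ℕ} (hw : w ∈ permsOf n) : w.filter (· ≤ n) = w :=
  List.filter_eq_self.2 fun x hx => by simpa using ((mem_iff_of_mem_permsOf hw).1 hx).2

theorem filter_le_mem_permsOf {k d : ℕ} {w : List ℕ} (hw : w ∈ permsOf (k + d)) :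
    w.filter (· ≤ k) ∈ permsOf k := by
  induction d generalizing k with
  | zero => rwa [filter_le_eq_self (n := k) hw]
  | succ d ih =>
    rw [← filter_le_succ_erase (mem_permsOf_iff.1 hw).1]
    exact erase_mem_permsOf (ih (by rwa [show k + 1 + d = k + (d + 1) by omega]))

theorem filter_le_filter_le {j k : ℕ} (h : j ≤ k) (w : List ℕ) :
    (w.filter (· ≤ k)).filter (· ≤ j) = w.filter (· ≤ j) := by
  rw [List.filter_filter]
  refine List.filter_congr fun x _ => ?_
  by_cases hx : x ≤ j <;> simp [hx]
  omega

theorem invCount_eq_sum (l : List ℕ) :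
    invCount l =
      ∑ i : Fin l.length, ∑ j : Fin l.length, if i < j ∧ l.get j < l.get i then 1 else 0 := by
  rw [invCount, Finset.card_filter, Fintype.sum_prod_type]

theorem invCount_cons (x : ℕ) (l : List ℕ) :
    invCount (x :: l) = l.countP (· < x) + invCount l := by
  rw [invCount_eq_sum, invCount_eq_sum]
  have hcount : ∑ j : Fin l.length, (if l[j.1] < x then 1 else 0) = l.countP (· < x) := by
    rw [Fin.sum_univ_fun_getElem l (fun y => if y < x then 1 else 0)]
    induction l with
    | nil => rfl
    | cons y l ih => simp [List.countP_cons, ih, add_comm]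
  show (∑ i : Fin (l.length + 1), ∑ j : Fin (l.length + 1),
      if i < j ∧ (x :: l).get j < (x :: l).get i then 1 else 0) = _
  simp only [Fin.sum_univ_succ, Fin.succ_lt_succ_iff, List.get_eq_getElem, Fin.val_succ,
    List.getElem_cons_succ, Fin.val_zero, List.getElem_cons_zero, Fin.succ_pos, Fin.not_lt_zero,
    false_and, if_false, true_and, zero_add, hcount]

theorem invCount_append_cons_of_lt {m : ℕ} {a b : List ℕ} (h : ∀ x ∈ a ++ b, x < m) :
    invCount (a ++ m :: b) = invCount (a ++ b) + b.length := by
  induction a with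
  | nil =>
    simp only [List.nil_append]
    rw [invCount_cons, List.countP_eq_length.2 fun x hx => by simpa using h x hx]
    omega
  | cons y a ih =>
    have hy : ¬ m < y := Nat.not_lt.2 (h y List.mem_cons_self).le
    simp only [List.cons_append, invCount_cons, List.countP_append, List.countP_cons, hy,
      ih fun x hx => h x (List.mem_cons_of_mem y hx)]
    simp only [decide_false, Bool.false_eq_true, ↓reduceIte, add_zero]
    omega

theorem invCount_eq_invCount_erase_add {k : ℕ} {v : List ℕ} (hv : v ∈ permsOf (k + 1)) :
    invCount v = invCount (v.erase (k + 1)) + (k - v.idxOf (k + 1)) := by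
  obtain ⟨hnd, hlen, -⟩ := mem_permsOf_iff.1 hv
  obtain ⟨a, b, rfl⟩ := List.append_of_mem ((mem_iff_of_mem_permsOf hv).2 (by omega) : k + 1 ∈ v)
  have ha : k + 1 ∉ a := fun h =>
    (List.nodup_cons.1 (List.nodup_middle.1 hnd)).1 (List.mem_append_left b h)
  have herase : (a ++ (k + 1) :: b).erase (k + 1) = a ++ b := by
    rw [List.erase_append_right _ ha, List.erase_cons_head]
  have hlt : ∀ x ∈ a ++ b, x < k + 1 := fun x hx => by
    rw [← herase, hnd.mem_erase_iff, mem_iff_of_mem_permsOf hv] at hx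
    omega
  rw [invCount_append_cons_of_lt hlt, herase, List.idxOf_append_of_notMem ha,
    List.idxOf_cons_self]
  simp only [List.length_append, List.length_cons] at hlen
  omega

theorem sum_sub_idxOf_filter_le {n : ℕ} {w : List ℕ} (hw : w ∈ permsOf n) :
    ∑ k : Fin n, ((k : ℕ) - (w.filter (· ≤ (k : ℕ) + 1)).idxOf ((k : ℕ) + 1)) = invCount w := by
  induction n generalizing w with
  | zero => rw [eq_nil_of_mem_permsOf_zero hw]; rfl
  | succ n ih =>
    have herase : w.erase (n + 1) = w.filter (· ≤ n) := by
      simpa only [filter_le_eq_self hw] using filter_le_succ_erase (mem_permsOf_iff.1 hw).1 n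
    have hprefix : ∑ k : Fin n, ((k : ℕ) - (w.filter (· ≤ (k : ℕ) + 1)).idxOf ((k : ℕ) + 1)) =
        invCount (w.filter (· ≤ n)) := by
      rw [← ih (filter_le_mem_permsOf (d := 1) hw)]
      refine Finset.sum_congr rfl fun k _ => ?_
      rw [filter_le_filter_le k.is_lt]
    rw [Fin.sum_univ_castSucc]
    simp only [Fin.val_castSucc, Fin.val_last, hprefix, filter_le_eq_self hw,
      invCount_eq_invCount_erase_add hw, herase]

theorem permUp_erase (k : ℕ) (v : List ℕ) :
    permUp k (v.erase (k + 1)) v = X ^ (k - v.idxOf (k + 1)) := by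
  rw [permUp, if_pos rfl]
  congr 1
  omega

def stdTail (w : List ℕ) : List ℕ := w.tail.map (fun x => if w.headI < x then x - 1 else x)

theorem stdTail_cons (h : ℕ) (t : List ℕ) :
    stdTail (h :: t) = t.map fun x => if h < x then x - 1 else x :=
  rfl

theorem stdTail_mem_permsOf {k : ℕ} {v : List ℕ} (hv : v ∈ permsOf (k + 1)) :
    stdTail v ∈ permsOf k := by
  obtain ⟨hnd, hlen, hbd⟩ := mem_permsOf_iff.1 hv
  cases v with
  | nil => simp at hlen
  | cons h t =>
    obtain ⟨hht, htnd⟩ := List.nodup_cons.1 hnd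
    have hne : ∀ x ∈ t, x ≠ h := fun x hx hxh => hht (hxh ▸ hx)
    have hbd' : ∀ x ∈ t, 1 ≤ x ∧ x ≤ k + 1 := fun x hx => hbd x (List.mem_cons_of_mem h hx)
    have hh := hbd h List.mem_cons_self
    rw [stdTail_cons]
    refine mem_permsOf_iff.2 ⟨htnd.map_on fun x hx y hy hxy => ?_, by simpa using hlen, ?_⟩
    · have := hne x hx
      have := hne y hy
      have := hbd' x hx
      have := hbd' y hy
      split_ifs at hxy <;> omega
    · simp only [List.mem_map]
      rintro _ ⟨x, hx, rfl⟩
      have := hne x hx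
      have := hbd' x hx
      split_ifs <;> omega

theorem iterate_stdTail_mem_permsOf {k d : ℕ} {w : List ℕ} (hw : w ∈ permsOf (k + d)) :
    stdTail^[d] w ∈ permsOf k := by
  induction d generalizing k with
  | zero => exact hw
  | succ d ih =>
    rw [Function.iterate_succ_apply']
    exact stdTail_mem_permsOf (ih (by rwa [show k + 1 + d = k + (d + 1) by omega]))

/-- For every permutation `w ∈ S_n`:
(i) the weight generating function of paths `∅ = w₀, w₁, …, w_n = w` (with `w_k ∈ S_k`)
in `Perm`, i.e. the sum of `∏_{k=1}^{n} a(w_{k-1}, w_k)`, equals `q^{inv(w)}`; and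
(ii) the corresponding sum of `∏_{k=1}^{n} b(w_{k-1}, w_k)` for `Perm'` equals `1`. -/
theorem stmt_7 (n : ℕ) (w : List ℕ) (hw : w ∈ permsOf n) :
    (∑ᶠ p : {p : Fin (n + 1) → List ℕ //
        (∀ k : Fin (n + 1), p k ∈ permsOf k.1) ∧ p 0 = [] ∧ p (Fin.last n) = w},
      ∏ k : Fin n, permUp k.1 (p.1 k.castSucc) (p.1 k.succ)) = X ^ invCount w ∧
    (∑ᶠ p : {p : Fin (n + 1) → List ℕ //
        (∀ k : Fin (n + 1), p k ∈ permsOf k.1) ∧ p 0 = [] ∧ p (Fin.last n) = w},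
      ∏ k : Fin n, permDown (p.1 k.castSucc) (p.1 k.succ)) = 1 := by
  have hfilter (k : Fin (n + 1)) : w.filter (· ≤ k.1) ∈ permsOf k :=
    filter_le_mem_permsOf (d := n - k) (by rwa [Nat.add_sub_cancel' k.is_le])
  have hstd (k : Fin (n + 1)) : stdTail^[n - k] w ∈ permsOf k :=
    iterate_stdTail_mem_permsOf (by rwa [Nat.add_sub_cancel' k.is_le])
  constructor
  · refine (finsum_prod_eq_of_backward (fun k (v : List ℕ) => v.erase (k + 1)) permUp
      (fun k u v h => by rw [permUp, if_neg h.symm]) (fun k => w.filter (· ≤ k.1))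
      ⟨hfilter, eq_nil_of_mem_permsOf_zero (hfilter 0), filter_le_eq_self hw⟩
      (fun k => (filter_le_succ_erase (mem_permsOf_iff.1 hw).1 k).symm)
      (fun p hp => hp.2.2.trans (filter_le_eq_self hw).symm)).trans ?_
    simp only [Fin.val_succ, permUp_erase, Finset.prod_pow_eq_pow_sum, sum_sub_idxOf_filter_le hw]
  · refine (finsum_prod_eq_of_backward (fun _ => stdTail) (fun _ => permDown)
      (fun _ _ _ h => if_neg h) (fun k => stdTail^[n - k] w)
      ⟨hstd, eq_nil_of_mem_permsOf_zero (hstd 0), by simp⟩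
      (fun k => by
        rw [Fin.val_succ, Fin.val_castSucc, ← Function.iterate_succ_apply' stdTail]
        congr 2
        omega)
      (fun p hp => hp.2.2.trans (by simp))).trans ?_
    exact Finset.prod_eq_one fun _ _ => if_pos rfl
end

section
/- Fix a positive integer r. Consider words over the alphabet {1_1, 1_2, …, 1_r, 2}, where each letter 1_j has value 1 and the letter 2 has value 2; the height h(w) of a word w is the sum of the values of its letters. For words v, w with h(w) = h(v) + 1, say (v, w) is an edge of form (1) if v is obtained from w by removing the leftmost letter of value 1, and of form (2) if v is obtained from w by changing some occurrence of 2 into one of the letters 1_1, …, 1_r such that all letters to the left of that occurrence are also 2's. Let s(v,w) be the number of letters of w preceding the removed or changed letter. Define m(v,w) = q^{s(v,w)} for form (1) and m(v,w) = q^{s(v,w)+1} for form (2); define m'(v,w) = q^{s(v,w)} for both forms; set m(v,w) = m'(v,w) = 0 if (v,w) is not an edge. Then for all words u, v with h(u) = h(v): ∑_{w} m(u,w)·m'(v,w) = q·∑_{x} m'(x,u)·m(x,v) + r·δ_{u,v}, as an identity in ℤ[q]. -/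
open Polynomial
open scoped Classical

/-- A letter of the quantized `r`-Fibonacci poset: `some j` is the letter `1_j`
(for `j = 1, …, r`, of value `1`) and `none` is the letter `2` (of value `2`). -/
abbrev FibLetter (r : ℕ) := Option (Fin r)

/-- The value of a letter: each `1_j` has value `1`, the letter `2` has value `2`. -/
def letterValue {r : ℕ} : FibLetter r → ℕ
  | some _ => 1
  | none => 2

/-- The height of a word: the sum of the values of its letters. -/
def fibHeight {r : ℕ} (w : List (FibLetter r)) : ℕ :=
  (w.map letterValue).sum

/-- The up-weight `m(v,w)` in `Fib_(r)` (with `q = X ∈ ℤ[q]`): it is `q^{s(v,w)}` if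
`(v,w)` is an edge of form (1), i.e. `v` is obtained from `w` by removing the leftmost
letter of value `1` (at position `k`, preceded by `s(v,w) = k` letters, all of value 2);
it is `q^{s(v,w)+1}` if `(v,w)` is an edge of form (2), i.e. `v` is obtained from `w` by
changing an occurrence of `2` (all letters to whose left are also `2`'s) into one of the
letters `1_1, …, 1_r`; and it is `0` otherwise.  At most one summand below is nonzero. -/
noncomputable def fibUp (r : ℕ) (v w : List (FibLetter r)) : Polynomial ℤ :=
  (∑ k ∈ Finset.range w.length,
    if (∀ x ∈ w.take k, x = none) ∧ (∃ j : Fin r, w[k]? = some (some j)) ∧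
        v = w.eraseIdx k
    then X ^ k else 0) +
  (∑ k ∈ Finset.range w.length, ∑ j : Fin r,
    if (∀ x ∈ w.take k, x = none) ∧ w[k]? = some none ∧ v = w.set k (some j)
    then X ^ (k + 1) else 0)

/-- The down-weight `m'(v,w)` in `Fib'_(r)`: defined like `fibUp` but with weight
`q^{s(v,w)}` for edges of both forms (1) and (2). -/
noncomputable def fibDown (r : ℕ) (v w : List (FibLetter r)) : Polynomial ℤ :=
  (∑ k ∈ Finset.range w.length,
    if (∀ x ∈ w.take k, x = none) ∧ (∃ j : Fin r, w[k]? = some (some j)) ∧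
        v = w.eraseIdx k
    then X ^ k else 0) +
  (∑ k ∈ Finset.range w.length, ∑ j : Fin r,
    if (∀ x ∈ w.take k, x = none) ∧ w[k]? = some none ∧ v = w.set k (some j)
    then X ^ k else 0)

/-!
Reading off the first letter of the upper word gives recursions for both weights: `1_j t`
covers only `t`, with weight `1`; `2 t` covers each `1_j t`, with weight `q` in `Fib_(r)` and `1`
in `Fib'_(r)`, and covers `2 v` for every `v` covered by `t`, with the weight of `(v, t)`
multiplied by `q`. By induction these give `m(x, 2y) = q·m'(y, x)` and `m'(x, 2y) = m(y, x)`.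
Now split `∑_w m(u,w)·m'(v,w)` by the first letter of `w`: the words `1_j t` contribute
`r·δ_{u,v}`, and the words `2 t` contribute `q·∑_x m'(x,u)·m(x,v)`.
-/

theorem finsum_list_eq_sum_finsum_cons {α M : Type*} [Fintype α] [AddCommMonoid M]
    {f : List α → M} (hf : (Function.support f).Finite) (hnil : f [] = 0) :
    ∑ᶠ l, f l = ∑ a, ∑ᶠ t, f (a :: t) := by
  have hcons : Function.Injective fun p : α × List α => p.1 :: p.2 := fun p q h => by
    simpa [Prod.ext_iff] using h
  have hrange : ∀ l ∈ Function.support f,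
      l ∈ Set.range (fun p : α × List α => p.1 :: p.2) ↔ l ∈ Set.univ := by
    rintro (_ | ⟨a, t⟩) hl
    · exact absurd hnil hl
    · exact iff_of_true ⟨(a, t), rfl⟩ trivial
  rw [← finsum_mem_univ, ← finsum_mem_inter_support_eq' _ _ _ hrange, finsum_mem_range hcons,
    finsum_curry _ (hf.preimage hcons.injOn), finsum_eq_sum_of_fintype]

section FibonacciWeights

variable {r : ℕ}

section Recursion

variable (v t : List (FibLetter r))

@[simp] theorem fibUp_nil : fibUp r v [] = 0 := by
  simp [fibUp]

@[simp] theorem fibUp_cons_some (j : Fin r) :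
    fibUp r v (some j :: t) = if v = t then 1 else 0 := by
  simp [fibUp, Finset.sum_range_succ']

@[simp] theorem fibUp_nil_cons_none : fibUp r [] (none :: t) = 0 := by
  simp [fibUp, Finset.sum_range_succ']

@[simp] theorem fibUp_cons_some_cons_none (i : Fin r) :
    fibUp r (some i :: v) (none :: t) = if v = t then X else 0 := by
  simp [fibUp, Finset.sum_range_succ', ite_and]

@[simp] theorem fibUp_cons_none_cons_none :
    fibUp r (none :: v) (none :: t) = X * fibUp r v t := by
  simp [fibUp, Finset.sum_range_succ', pow_succ', Finset.mul_sum, mul_add]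

@[simp] theorem fibDown_nil : fibDown r v [] = 0 := by
  simp [fibDown]

@[simp] theorem fibDown_cons_some (j : Fin r) :
    fibDown r v (some j :: t) = if v = t then 1 else 0 := by
  simp [fibDown, Finset.sum_range_succ']

@[simp] theorem fibDown_nil_cons_none : fibDown r [] (none :: t) = 0 := by
  simp [fibDown, Finset.sum_range_succ']

@[simp] theorem fibDown_cons_some_cons_none (i : Fin r) :
    fibDown r (some i :: v) (none :: t) = if v = t then 1 else 0 := by
  simp [fibDown, Finset.sum_range_succ', ite_and]

@[simp] theorem fibDown_cons_none_cons_none :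
    fibDown r (none :: v) (none :: t) = X * fibDown r v t := by
  simp [fibDown, Finset.sum_range_succ', pow_succ', Finset.mul_sum, mul_add]

end Recursion

theorem fibUp_cons_none (x y : List (FibLetter r)) :
    fibUp r x (none :: y) = X * fibDown r y x := by
  induction x generalizing y with
  | nil => simp
  | cons a x ih =>
    rcases a with _ | i
    · rcases y with _ | ⟨_ | j, y⟩ <;> simp [ih, eq_comm]
    · simp [eq_comm]

theorem fibDown_cons_none (x y : List (FibLetter r)) :
    fibDown r x (none :: y) = fibUp r y x := by
  rcases x with _ | ⟨_ | i, x⟩ <;> simp [fibUp_cons_none, eq_comm]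

theorem length_le_of_fibUp_ne_zero {v w : List (FibLetter r)} (h : fibUp r v w ≠ 0) :
    w.length ≤ v.length + 1 := by
  induction w generalizing v with
  | nil => simp
  | cons a t ih =>
    rcases a with _ | j
    · rcases v with _ | ⟨_ | i, v⟩
      · simp at h
      · simpa using ih (by simpa using h)
      · simp_all
    · simp_all

end FibonacciWeights

theorem stmt_8_general (r : ℕ) (u v : List (FibLetter r)) :
    (∑ᶠ w : List (FibLetter r), fibUp r u w * fibDown r v w)
      = X * (∑ᶠ x : List (FibLetter r), fibDown r x u * fibUp r x v)
        + (r : Polynomial ℤ) * (if u = v then 1 else 0) := by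
  have hfin : (Function.support fun w => fibUp r u w * fibDown r v w).Finite :=
    (List.finite_length_le _ (u.length + 1)).subset fun w hw =>
      length_le_of_fibUp_ne_zero (left_ne_zero_of_mul hw)
  rw [finsum_list_eq_sum_finsum_cons hfin (by simp), Fintype.sum_option]
  congr 1
  · simp only [fibUp_cons_none, fibDown_cons_none, mul_assoc, mul_finsum]
  · have hsingle (j : Fin r) :
        ∑ᶠ t, fibUp r u (some j :: t) * fibDown r v (some j :: t) = if u = v then 1 else 0 := by
      rw [finsum_eq_single _ v fun t ht => by simp [Ne.symm ht]]
      simp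
    simp only [hsingle, Finset.sum_const, Finset.card_univ, Fintype.card_fin, nsmul_eq_mul]

/-- The quantized `r`-Fibonacci poset `(Fib_(r), Fib'_(r))` is a
quantized dual graded graph with differential coefficient `r`: for all words `u, v` over
the alphabet `{1_1, …, 1_r, 2}` with `h(u) = h(v)`,
`∑_w m(u,w)·m'(v,w) = q·∑_x m'(x,u)·m(x,v) + r·δ_{u,v}` in `ℤ[q]`. -/
theorem stmt_8 (r : ℕ) (hr : 0 < r) (u v : List (FibLetter r))
    (huv : fibHeight u = fibHeight v) :
    (∑ᶠ w : List (FibLetter r), fibUp r u w * fibDown r v w)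
      = X * (∑ᶠ x : List (FibLetter r), fibDown r x u * fibUp r x v)
        + (r : Polynomial ℤ) * (if u = v then 1 else 0) :=
  stmt_8_general r u v
end

section
/- Let r be a positive integer and let (Γ_n, Γ'_n) be a partial qDGG of height n over a commutative ring R with distinguished element q: that is, weight functions m, m' on a vertex set V graded by h : V → {0,1,…,n}, supported on pairs (v,w) with h(w) = h(v)+1, such that for all u, v with h(u) = h(v) < n one has ∑_w m(u,w)·m'(v,w) = q·∑_x m'(x,u)·m(x,v) + r·δ_{u,v}. Extend the vertex set by adding, at height n+1, the set V_{n+1} = {v^1, …, v^r : v ∈ V, h(v) = n} ⊔ {w' : w ∈ V, h(w) = n-1}, and extend the weights by: in Γ_{n+1}, put m(v, v^j) = 1 for each v of height n and j = 1,…,r, and m(v, w') = q·m'(w,v) for each v of height n and w of height n-1 with m'(w,v) ≠ 0; in Γ'_{n+1}, put m'(v, v^j) = 1 and m'(v, w') = m(w,v). Then the extended pair (Γ_{n+1}, Γ'_{n+1}) satisfies ∑_w m(u,w)·m'(v,w) = q·∑_x m'(x,u)·m(x,v) + r·δ_{u,v} for all u, v with h(u) = h(v) < n+1; in particular this relation holds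 for all u, v of height exactly n. -/
/-! For old vertices `a, b` of equal height, new vertices have no outgoing weights, so the
down-sum `∑ₓ m'(x,a)·m(x,b)` only sees old vertices. Below height `n` the new vertices carry no
weight from `a` either, and the relation is the old one. At height `n` the old up-sum is empty
(there is nothing at height `n+1` in `V`), the copies `v^j` contribute `r·δ_{a,b}`, and the
vertex `w'` contributes `q·m'(w,a)·m(w,b)`, which sums to `q` times the down-sum. -/

open scoped Classical

/-- The extended vertex set of the `q`-reflection construction: the old vertices `V`,
together with the new height-`(n+1)` vertices `v^1, …, v^r` for each `v ∈ V` with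
`h(v) = n` and `w'` for each `w ∈ V` with `h(w) = n - 1` (i.e. `h(w) + 1 = n`). -/
abbrev ReflExt (V : Type*) (h : V → ℕ) (n r : ℕ) : Type _ :=
  V ⊕ ({v : V // h v = n} × Fin r ⊕ {w : V // h w + 1 = n})

/-- The extended height function: old vertices keep their height, new vertices get
height `n + 1`. -/
def reflHeight {V : Type*} (h : V → ℕ) (n r : ℕ) : ReflExt V h n r → ℕ
  | Sum.inl v => h v
  | Sum.inr _ => n + 1

/-- The extended up-weights of `Γ_{n+1}`: the old weights `m`, together with
`m(v, v^j) = 1` for each `v` of height `n` and `j = 1, …, r`, and `m(v, w') = q·m'(w,v)`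
for `v` of height `n` and `w` of height `n - 1`. -/
noncomputable def reflUp {R V : Type*} [CommRing R] (q : R) (h : V → ℕ) (n r : ℕ)
    (m m' : V → V → R) : ReflExt V h n r → ReflExt V h n r → R
  | Sum.inl v, Sum.inl w => m v w
  | Sum.inl v, Sum.inr (Sum.inl (u, _)) => if v = u.1 then 1 else 0
  | Sum.inl v, Sum.inr (Sum.inr w) => q * m' w.1 v
  | Sum.inr _, _ => 0

/-- The extended down-weights of `Γ'_{n+1}`: the old weights `m'`, together with
`m'(v, v^j) = 1` and `m'(v, w') = m(w, v)`. -/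
noncomputable def reflDown {R V : Type*} [CommRing R] (h : V → ℕ) (n r : ℕ)
    (m m' : V → V → R) : ReflExt V h n r → ReflExt V h n r → R
  | Sum.inl v, Sum.inl w => m' v w
  | Sum.inl v, Sum.inr (Sum.inl (u, _)) => if v = u.1 then 1 else 0
  | Sum.inl v, Sum.inr (Sum.inr w) => m w.1 v
  | Sum.inr _, _ => 0

open Function Set

theorem finsum_comp_of_support_subset_range {α β M : Type*} [AddCommMonoid M] {f : α → M}
    {g : β → α} (hg : Injective g) (hf : support f ⊆ range g) :
    ∑ᶠ b, f (g b) = ∑ᶠ a, f a := by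
  rw [← finsum_mem_range hg, ← finsum_mem_univ f]
  exact finsum_mem_inter_support_eq' f _ _ fun x hx => iff_of_true (hf hx) trivial

theorem support_subset_range_inl {α β M : Type*} [Zero M] {f : α ⊕ β → M}
    (hf : ∀ b, f (.inr b) = 0) : support f ⊆ range Sum.inl
  | .inl a, _ => mem_range_self a
  | .inr b, hb => absurd (hf b) hb

theorem support_subset_range_inr {α β M : Type*} [Zero M] {f : α ⊕ β → M}
    (hf : ∀ a, f (.inl a) = 0) : support f ⊆ range Sum.inr
  | .inl a, ha => absurd (hf a) ha
  | .inr b, _ => mem_range_self b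

section Reflection

variable {R V : Type*} [CommRing R] (q : R) {h : V → ℕ} {n r : ℕ} (m m' : V → V → R)

theorem finsum_reflDown_mul_reflUp_inl (a b : V) :
    ∑ᶠ x, reflDown h n r m m' x (.inl a) * reflUp q h n r m m' x (.inl b)
      = ∑ᶠ x, m' x a * m x b :=
  (finsum_comp_of_support_subset_range Sum.inl_injective
    (support_subset_range_inl fun _ => zero_mul _)).symm

theorem reflUp_inl_inr_of_ne (hm' : ∀ v w : V, m' v w ≠ 0 → h w = h v + 1) {a : V}
    (ha : h a ≠ n) (c : {v : V // h v = n} × Fin r ⊕ {w : V // h w + 1 = n}) :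
    reflUp q h n r m m' (.inl a) (.inr c) = 0 := by
  rcases c with ⟨⟨v, hv⟩, _⟩ | ⟨w, hw⟩
  · exact if_neg fun hav : a = v => ha (hav ▸ hv)
  · have : m' w a = 0 := by_contra fun hwa => ha (by have := hm' w a hwa; omega)
    simp [reflUp, this]

theorem finsum_reflUp_mul_reflDown_inl_of_ne (hm' : ∀ v w : V, m' v w ≠ 0 → h w = h v + 1)
    {a : V} (ha : h a ≠ n) (b : V) :
    ∑ᶠ w, reflUp q h n r m m' (.inl a) w * reflDown h n r m m' (.inl b) w
      = ∑ᶠ w, m a w * m' b w :=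
  (finsum_comp_of_support_subset_range Sum.inl_injective (support_subset_range_inl fun c => by
    rw [reflUp_inl_inr_of_ne q m m' hm' ha, zero_mul])).symm

theorem sum_reflUp_mul_reflDown_copies [Fintype {v : V // h v = n}] {a : V} (ha : h a = n)
    (b : V) :
    ∑ p : {v : V // h v = n} × Fin r,
        reflUp q h n r m m' (.inl a) (.inr (.inl p))
          * reflDown h n r m m' (.inl b) (.inr (.inl p))
      = r * if a = b then 1 else 0 := by
  rw [Fintype.sum_prod_type]
  simp only [reflUp, reflDown, Finset.sum_const, Finset.card_univ, Fintype.card_fin, nsmul_eq_mul,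
    ← Finset.mul_sum]
  rw [Finset.sum_eq_single ⟨a, ha⟩]
  · simp [eq_comm]
  · intro v _ hv
    rw [if_neg fun hav : a = v => hv (Subtype.ext hav.symm), zero_mul]
  · simp

theorem sum_reflUp_mul_reflDown_reflections [Fintype {w : V // h w + 1 = n}]
    (hm' : ∀ v w : V, m' v w ≠ 0 → h w = h v + 1) {a : V} (ha : h a = n) (b : V) :
    ∑ w : {w : V // h w + 1 = n},
        reflUp q h n r m m' (.inl a) (.inr (.inr w))
          * reflDown h n r m m' (.inl b) (.inr (.inr w))
      = q * ∑ᶠ x, m' x a * m x b := by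
  have hsupp : support (fun x => m' x a * m x b)
      ⊆ range (Subtype.val : {w : V // h w + 1 = n} → V) :=
    fun x hx => ⟨⟨x, ha ▸ (hm' x a (left_ne_zero_of_mul hx)).symm⟩, rfl⟩
  rw [← finsum_comp_of_support_subset_range Subtype.val_injective hsupp,
    finsum_eq_sum_of_fintype, Finset.mul_sum]
  exact Finset.sum_congr rfl fun w _ => mul_assoc _ _ _

theorem finsum_reflUp_mul_reflDown_inl_of_eq [Fintype {v : V // h v = n}]
    [Fintype {w : V // h w + 1 = n}] (hht : ∀ v : V, h v ≤ n)
    (hm : ∀ v w : V, m v w ≠ 0 → h w = h v + 1)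
    (hm' : ∀ v w : V, m' v w ≠ 0 → h w = h v + 1) {a : V} (ha : h a = n) (b : V) :
    ∑ᶠ w, reflUp q h n r m m' (.inl a) w * reflDown h n r m m' (.inl b) w
      = q * (∑ᶠ x, m' x a * m x b) + r * if a = b then 1 else 0 := by
  have hold : ∀ w, m a w = 0 := fun w =>
    by_contra fun haw => by have := hm a w haw; have := hht w; omega
  rw [← finsum_comp_of_support_subset_range Sum.inr_injective
      (support_subset_range_inr fun w => by rw [reflUp, hold, zero_mul]),
    finsum_eq_sum_of_fintype, Fintype.sum_sum_type, sum_reflUp_mul_reflDown_copies q m m' ha,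
    sum_reflUp_mul_reflDown_reflections q m m' hm' ha, add_comm]

end Reflection

theorem stmt_9_general {R V : Type*} [CommRing R] (q : R) (r : ℕ)
    (n : ℕ) (h : V → ℕ) (m m' : V → V → R)
    -- the heights of `Γ_n` take values in `{0, 1, …, n}`
    (hht : ∀ v : V, h v ≤ n)
    -- finitely many vertices of each height
    (hfin : ∀ k : ℕ, {v : V | h v = k}.Finite)
    -- weights are supported on pairs `(v, w)` with `h(w) = h(v) + 1`
    (hm : ∀ v w : V, m v w ≠ 0 → h w = h v + 1)
    (hm' : ∀ v w : V, m' v w ≠ 0 → h w = h v + 1)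
    -- the partial qDGG relation, for all vertices of height `< n`
    (hdual : ∀ u v : V, h u = h v → h u < n →
      (∑ᶠ w : V, m u w * m' v w)
        = q * (∑ᶠ x : V, m' x u * m x v) + (r : R) * (if u = v then 1 else 0)) :
    ∀ u v : ReflExt V h n r, reflHeight h n r u = reflHeight h n r v →
      reflHeight h n r u < n + 1 →
      (∑ᶠ w : ReflExt V h n r, reflUp q h n r m m' u w * reflDown h n r m m' v w)
        = q * (∑ᶠ x : ReflExt V h n r, reflDown h n r m m' x u * reflUp q h n r m m' x v)
          + (r : R) * (if u = v then 1 else 0) := by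
  have : Fintype {v : V // h v = n} := (hfin n).fintype
  have : Fintype {w : V // h w + 1 = n} :=
    ((hfin (n - 1)).subset fun w (hw : h w + 1 = n) => show h w = n - 1 by omega).fintype
  rintro (a | c) (b | c) huv hlt <;> simp only [reflHeight] at huv hlt
  · rw [finsum_reflDown_mul_reflUp_inl]
    simp only [Sum.inl.injEq]
    rcases (hht a).lt_or_eq with ha | ha
    · rw [finsum_reflUp_mul_reflDown_inl_of_ne q m m' hm' ha.ne, hdual a b huv ha]
    · exact finsum_reflUp_mul_reflDown_inl_of_eq q m m' hht hm hm' ha b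
  all_goals omega

/-- If `(Γ_n, Γ'_n)` is a partial qDGG of height `n` with differential
coefficient `r`, then the `q`-reflection extension `(Γ_{n+1}, Γ'_{n+1})` satisfies the
qDGG relation `∑_w m(u,w)·m'(v,w) = q·∑_x m'(x,u)·m(x,v) + r·δ_{u,v}` for all `u, v`
with `h(u) = h(v) < n + 1` (in particular for all `u, v` of height exactly `n`). -/
theorem stmt_9 {R V : Type*} [CommRing R] (q : R) (r : ℕ) (hr : 0 < r)
    (n : ℕ) (h : V → ℕ) (m m' : V → V → R)
    -- the heights of `Γ_n` take values in `{0, 1, …, n}`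
    (hht : ∀ v : V, h v ≤ n)
    -- finitely many vertices of each height
    (hfin : ∀ k : ℕ, {v : V | h v = k}.Finite)
    -- weights are supported on pairs `(v, w)` with `h(w) = h(v) + 1`
    (hm : ∀ v w : V, m v w ≠ 0 → h w = h v + 1)
    (hm' : ∀ v w : V, m' v w ≠ 0 → h w = h v + 1)
    -- the partial qDGG relation, for all vertices of height `< n`
    (hdual : ∀ u v : V, h u = h v → h u < n →
      (∑ᶠ w : V, m u w * m' v w)
        = q * (∑ᶠ x : V, m' x u * m x v) + (r : R) * (if u = v then 1 else 0)) :
    ∀ u v : ReflExt V h n r, reflHeight h n r u = reflHeight h n r v →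
      reflHeight h n r u < n + 1 →
      (∑ᶠ w : ReflExt V h n r, reflUp q h n r m m' u w * reflDown h n r m m' v w)
        = q * (∑ᶠ x : ReflExt V h n r, reflDown h n r m m' x u * reflUp q h n r m m' x v)
          + (r : R) * (if u = v then 1 else 0) :=
  stmt_9_general q r n h m m' hht hfin hm hm' hdual
end
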